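/- (Ingleton inequality for subspaces) For subspaces A, B, C, D of a finite-dimensional vector space V, I(A;B) ≤ I(A;B|C) + I(A;B|D) + I(C;D), where I(X;Y) = dim X + dim Y - dim(X+Y) and I(X;Y|T) = dim(X+T) + dim(Y+T) - dim(X+Y+T) - dim T. -/

import Mathlib

open Module

noncomputable def condH {F V : Type*} [Field F] [AddCommGroup V] [Module F V]
    (X Y : Submodule F V) : ℤ :=
  (finrank F ↑(X ⊔ Y) : ℤ) - finrank F ↑Y

noncomputable def mutI {F V : Type*} [Field F] [AddCommGroup V] [Module F V]
    (X Y : Submodule F V) : ℤ :=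
  (finrank F ↑X : ℤ) + finrank F ↑Y - finrank F ↑(X ⊔ Y)

noncomputable def condI {F V : Type*} [Field F] [AddCommGroup V] [Module F V]
    (X Y T : Submodule F V) : ℤ :=
  (finrank F ↑(X ⊔ T) : ℤ) + finrank F ↑(Y ⊔ T) - finrank F ↑(X ⊔ Y ⊔ T) - finrank F ↑T

/-!
Put `E = A ⊓ B`, so that `I(A;B) = dim E`. Since `E + C ≤ (A + C) ⊓ (B + C)`, modularity gives
`I(A;B|C) ≥ dim (E + C) - dim C`, and likewise for `D`. The right-hand side is therefore at least
`dim (E + C) + dim (E + D) - dim (C + D)`, which is `≥ dim E` because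
`I(C;D|E) ≥ 0` and `dim (C + D) ≤ dim (C + D + E)`.
-/

section Ingleton

variable {F V : Type*} [Field F] [AddCommGroup V] [Module F V] [FiniteDimensional F V]

theorem mutI_eq_finrank_inf (X Y : Submodule F V) : mutI X Y = finrank F ↑(X ⊓ Y) := by
  have := Submodule.finrank_sup_add_finrank_inf_eq X Y
  unfold mutI
  omega

theorem condI_eq_finrank_inf_sub (X Y T : Submodule F V) :
    condI X Y T = finrank F ↑((X ⊔ T) ⊓ (Y ⊔ T)) - finrank F ↑T := by
  have := Submodule.finrank_sup_add_finrank_inf_eq (X ⊔ T) (Y ⊔ T)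
  rw [sup_sup_sup_comm, sup_idem] at this
  unfold condI
  omega

theorem condI_nonneg (X Y T : Submodule F V) : 0 ≤ condI X Y T := by
  have : finrank F ↑T ≤ finrank F ↑((X ⊔ T) ⊓ (Y ⊔ T)) :=
    Submodule.finrank_mono (le_inf le_sup_right le_sup_right)
  rw [condI_eq_finrank_inf_sub]
  omega

theorem finrank_inf_sup_sub_le_condI (X Y T : Submodule F V) :
    (finrank F ↑(X ⊓ Y ⊔ T) : ℤ) - finrank F ↑T ≤ condI X Y T := by
  have : finrank F ↑(X ⊓ Y ⊔ T) ≤ finrank F ↑((X ⊔ T) ⊓ (Y ⊔ T)) :=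
    Submodule.finrank_mono (le_inf (sup_le_sup_right inf_le_left _)
      (sup_le_sup_right inf_le_right _))
  rw [condI_eq_finrank_inf_sub]
  omega

end Ingleton

theorem stmt5 {F V : Type*} [Field F] [AddCommGroup V] [Module F V] [FiniteDimensional F V]
    (A B C D : Submodule F V) :
    mutI A B ≤ condI A B C + condI A B D + mutI C D := by
  have hC := finrank_inf_sup_sub_le_condI A B C
  have hD := finrank_inf_sup_sub_le_condI A B D
  have hCD : 0 ≤ condI C D (A ⊓ B) := condI_nonneg C D (A ⊓ B)
  have hmono : finrank F ↑(C ⊔ D) ≤ finrank F ↑(C ⊔ D ⊔ A ⊓ B) :=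
    Submodule.finrank_mono le_sup_left
  rw [mutI_eq_finrank_inf]
  unfold condI at hCD
  rw [sup_comm C, sup_comm D] at hCD
  unfold mutI
  omega
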